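/- Let I ⊴ ℝ[x₁,…,xₙ] be an ideal invariant under a ring automorphism σ acting as a signed permutation of the variables (σ·xᵢ = uᵢ·x_{π(i)} with π a permutation of {1,…,n}, uᵢ ∈ {+1,−1}), let w ∈ ℚⁿ, let ≼ be a monomial order, and let G be a Gröbner basis of the initial ideal in_w(I) with respect to ≼ consisting of binomials. Then in_{π·w}(I) ∩ ℝ≥0[x] = {0} if and only if σ·G ∩ ℝ≥0[x] = ∅ and σ·G ∩ ℝ≤0[x] = ∅, where π acts on weight vectors by permuting coordinates ((π·w)_{π(i)} = wᵢ). -/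

import Mathlib

/-!
The signed permutation `σ` carries `in_w(I)` onto `in_{π·w}(σ I) = in_{π·w}(I)`, and, since it
permutes exponent vectors, it carries the Gröbner basis `G` to a Gröbner basis `σ·G` for the
transported monomial order. It therefore suffices to show that an ideal `J` with a Gröbner basis
of binomials meets `ℝ≥0[x]` only in `0` iff no basis element has all its coefficients of one sign.
If some `g` does, `g` or `-g` is a nonzero element of `J ∩ ℝ≥0[x]`. Conversely, take a nonzero
`f ∈ J ∩ ℝ≥0[x]` with minimal leading monomial and a basis binomial `c x^β + d x^ν` (`cd < 0`)
whose leading monomial divides that of `f`: cancelling the leading term of `f` adds a positive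
multiple of a smaller monomial, giving an element of `J ∩ ℝ≥0[x]` with a smaller leading
monomial, which contradicts the well-foundedness of monomial orders.
-/

open MvPolynomial

/-- A monomial order on exponent vectors in `ℕⁿ`: a linear order on `Fin n →₀ ℕ`
compatible with addition and having `0` as least element. -/
structure MonOrd (n : ℕ) where
  le : (Fin n →₀ ℕ) → (Fin n →₀ ℕ) → Prop
  le_refl : ∀ a, le a a
  le_trans : ∀ a b c, le a b → le b c → le a c
  le_antisymm : ∀ a b, le a b → le b a → a = b
  le_total : ∀ a b, le a b ∨ le b a
  add_le_add_right : ∀ a b, le a b → ∀ c, le (a + c) (b + c)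
  zero_le : ∀ a, le 0 a

/-- `α` is the exponent vector of the `m`-leading monomial of `f`. -/
def IsLeadMon {n : ℕ} (m : MonOrd n) (f : MvPolynomial (Fin n) ℝ) (α : Fin n →₀ ℕ) : Prop :=
  α ∈ f.support ∧ ∀ β ∈ f.support, m.le β α

/-- `G` is a Gröbner basis of `J` with respect to the monomial order `m`. -/
def IsGroebnerBasis {n : ℕ} (m : MonOrd n) (G : Finset (MvPolynomial (Fin n) ℝ))
    (J : Ideal (MvPolynomial (Fin n) ℝ)) : Prop :=
  (G : Set (MvPolynomial (Fin n) ℝ)) ⊆ (J : Set (MvPolynomial (Fin n) ℝ)) ∧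
    (∀ g ∈ G, g ≠ 0) ∧
    ∀ f ∈ J, f ≠ 0 → ∃ g ∈ G, ∃ α β, IsLeadMon m f α ∧ IsLeadMon m g β ∧ β ≤ α

/-- All coefficients of `f` are nonnegative, i.e. `f ∈ ℝ≥0[x]`. -/
def NonnegCoeffs {n : ℕ} (f : MvPolynomial (Fin n) ℝ) : Prop := ∀ α, 0 ≤ coeff α f

/-- All coefficients of `f` are nonpositive, i.e. `f ∈ ℝ≤0[x]`. -/
def NonposCoeffs {n : ℕ} (f : MvPolynomial (Fin n) ℝ) : Prop := ∀ α, coeff α f ≤ 0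

/-- The `w`-weighted degree of an exponent vector `α`: `w·α = Σᵢ wᵢ αᵢ`. -/
def wdeg {n : ℕ} (w : Fin n → ℚ) (α : Fin n →₀ ℕ) : ℚ := ∑ i, w i * (α i : ℚ)

/-- The initial form `in_w(f)`: the sum of the terms `c_α x^α` of `f` for which `w·α`
is maximal over the support of `f` (with `in_w(0) = 0`). -/
noncomputable def initialForm {n : ℕ} (w : Fin n → ℚ)
    (f : MvPolynomial (Fin n) ℝ) : MvPolynomial (Fin n) ℝ :=
  ∑ α ∈ f.support.filter (fun α => ∀ β ∈ f.support, wdeg w β ≤ wdeg w α),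
    monomial α (coeff α f)

/-- The initial ideal `in_w(I) = ⟨in_w(f) : f ∈ I⟩`. -/
noncomputable def initialIdeal {n : ℕ} (w : Fin n → ℚ)
    (I : Ideal (MvPolynomial (Fin n) ℝ)) : Ideal (MvPolynomial (Fin n) ℝ) :=
  Ideal.span (initialForm w '' (I : Set (MvPolynomial (Fin n) ℝ)))

namespace MonOrd

variable {n : ℕ} (m : MonOrd n)

def lt (a b : Fin n →₀ ℕ) : Prop := m.le a b ∧ a ≠ b

theorem le_of_pointwise_le {a b : Fin n →₀ ℕ} (h : a ≤ b) : m.le a b := by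
  obtain ⟨c, rfl⟩ := le_iff_exists_add.1 h
  simpa [add_comm] using m.add_le_add_right 0 c (m.zero_le c) a

instance : IsStrictOrder (Fin n →₀ ℕ) m.lt where
  irrefl _ h := h.2 rfl
  trans _ _ _ h₁ h₂ :=
    ⟨m.le_trans _ _ _ h₁.1 h₂.1, fun h => h₂.2 (m.le_antisymm _ _ h₂.1 (h ▸ h₁.1))⟩

/-- Dickson's lemma makes every monomial order a well-order. -/
theorem wellFounded_lt : WellFounded m.lt := by
  refine (RelEmbedding.wellFounded_iff_isEmpty (r := m.lt)).2 ⟨fun f => ?_⟩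
  obtain ⟨i, j, hij, hle⟩ := wellQuasiOrdered_le (α := Fin n →₀ ℕ) f
  have hlt : m.lt (f j) (f i) := f.map_rel_iff.2 hij
  exact hlt.2 (m.le_antisymm _ _ hlt.1 (m.le_of_pointwise_le hle))

theorem exists_max {s : Finset (Fin n →₀ ℕ)} (hs : s.Nonempty) :
    ∃ a ∈ s, ∀ b ∈ s, m.le b a := by
  induction hs using Finset.Nonempty.cons_induction with
  | singleton a => exact ⟨a, by simp, by simpa using m.le_refl a⟩
  | cons a s ha _ ih =>
    obtain ⟨b, hb, hmax⟩ := ih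
    rcases m.le_total a b with h | h
    · exact ⟨b, Finset.mem_cons_of_mem hb, by simpa [h] using hmax⟩
    · exact ⟨a, Finset.mem_cons_self a s, (Finset.forall_mem_cons ha _).2
        ⟨m.le_refl a, fun c hc => m.le_trans _ _ _ (hmax c hc) h⟩⟩

theorem exists_isLeadMon {f : MvPolynomial (Fin n) ℝ} (hf : f ≠ 0) : ∃ α, IsLeadMon m f α :=
  let ⟨α, hα, hmax⟩ := m.exists_max (support_nonempty.2 hf)
  ⟨α, hα, hmax⟩

def comap (e : (Fin n →₀ ℕ) ≃+ (Fin n →₀ ℕ)) : MonOrd n where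
  le a b := m.le (e a) (e b)
  le_refl a := m.le_refl (e a)
  le_trans a b c := m.le_trans (e a) (e b) (e c)
  le_antisymm a b h₁ h₂ := e.injective (m.le_antisymm _ _ h₁ h₂)
  le_total a b := m.le_total (e a) (e b)
  add_le_add_right a b h c := by simpa only [map_add] using m.add_le_add_right _ _ h (e c)
  zero_le a := by simpa only [map_zero] using m.zero_le (e a)

end MonOrd

section Binomial

variable {n : ℕ}

theorem exists_support_eq_pair {g : MvPolynomial (Fin n) ℝ} (hg : g.support.card = 2)
    {β : Fin n →₀ ℕ} (hβ : β ∈ g.support) : ∃ ν, ν ≠ β ∧ g.support = {β, ν} := by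
  obtain ⟨ν, hν⟩ := Finset.card_eq_one.1 (by rw [Finset.card_erase_of_mem hβ, hg] :
    (g.support.erase β).card = 1)
  refine ⟨ν, Finset.ne_of_mem_erase (hν ▸ Finset.mem_singleton_self ν), ?_⟩
  rw [← Finset.insert_erase hβ, hν]

theorem eq_monomial_add_monomial {g : MvPolynomial (Fin n) ℝ} {β ν : Fin n →₀ ℕ} (hne : ν ≠ β)
    (hg : g.support = {β, ν}) : g = monomial β (coeff β g) + monomial ν (coeff ν g) := by
  conv_lhs => rw [as_sum g, hg, Finset.sum_pair hne.symm]

theorem coeff_mul_coeff_neg {g : MvPolynomial (Fin n) ℝ} {β ν : Fin n →₀ ℕ}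
    (hg : g.support = {β, ν}) (hnn : ¬ NonnegCoeffs g) (hnp : ¬ NonposCoeffs g) :
    coeff β g * coeff ν g < 0 := by
  simp only [NonnegCoeffs, NonposCoeffs, not_forall, not_le] at hnn hnp
  obtain ⟨γ, hγ⟩ := hnn
  obtain ⟨δ, hδ⟩ := hnp
  have hmem : ∀ {ε}, coeff ε g ≠ 0 → ε = β ∨ ε = ν := fun h => by
    simpa [hg] using mem_support_iff.2 h
  rcases hmem hγ.ne with rfl | rfl <;> rcases hmem hδ.ne' with rfl | rfl <;>
    first | linarith | nlinarith

theorem coeff_sub_monomial_mul_of_support_eq_pair {f g : MvPolynomial (Fin n) ℝ}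
    {β ν : Fin n →₀ ℕ} (hne : ν ≠ β) (hg : g.support = {β, ν}) (τ γ : Fin n →₀ ℕ) (r : ℝ) :
    coeff γ (f - monomial τ r * g) = coeff γ f - (if τ + β = γ then r * coeff β g else 0)
      - (if τ + ν = γ then r * coeff ν g else 0) := by
  conv_lhs => rw [eq_monomial_add_monomial hne hg]
  rw [mul_add, monomial_mul, monomial_mul, coeff_sub, coeff_add, coeff_monomial, coeff_monomial]
  ring

theorem exists_mem_nonnegCoeffs_isLeadMon_lt (m : MonOrd n) {J : Ideal (MvPolynomial (Fin n) ℝ)}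
    {f g : MvPolynomial (Fin n) ℝ} {α β : Fin n →₀ ℕ} (hfJ : f ∈ J) (hgJ : g ∈ J)
    (hf : NonnegCoeffs f) (hfα : IsLeadMon m f α) (hgβ : IsLeadMon m g β) (hβα : β ≤ α)
    (hcard : g.support.card = 2) (hnn : ¬ NonnegCoeffs g) (hnp : ¬ NonposCoeffs g) :
    ∃ f₁ ∈ J, NonnegCoeffs f₁ ∧ ∃ α₁, IsLeadMon m f₁ α₁ ∧ m.lt α₁ α := by
  obtain ⟨ν, hνβ, hg⟩ := exists_support_eq_pair hcard hgβ.1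
  set a := coeff α f
  set c := coeff β g
  have hc : c ≠ 0 := mem_support_iff.1 hgβ.1
  have ha : 0 < a := (hf α).lt_of_ne' (mem_support_iff.1 hfα.1)
  have hq : a / c * coeff ν g < 0 := by
    rw [show a / c * coeff ν g = a * (c * coeff ν g) / c ^ 2 by field_simp]
    exact div_neg_of_neg_of_pos (mul_neg_of_pos_of_neg ha (coeff_mul_coeff_neg hg hnn hnp))
      (by positivity)
  set τ := α - β
  have hτ : τ + β = α := tsub_add_cancel_of_le hβα
  have hαν : τ + ν ≠ α := fun h => hνβ (add_left_cancel (h.trans hτ.symm))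
  set f₁ := f - monomial τ (a / c) * g
  have hcoeff : ∀ γ, coeff γ f₁ = coeff γ f - (if α = γ then a else 0)
      - (if τ + ν = γ then a / c * coeff ν g else 0) := fun γ => by
    rw [coeff_sub_monomial_mul_of_support_eq_pair hνβ hg, hτ, div_mul_cancel₀ a hc]
  have hf₁ : NonnegCoeffs f₁ := fun γ => by
    rw [hcoeff]
    split_ifs with h₁ h₂
    · exact absurd (h₂.trans h₁.symm) hαν
    · subst h₁; linarith
    all_goals linarith [hf γ]
  have hpos : 0 < coeff (τ + ν) f₁ := by
    rw [hcoeff, if_neg hαν.symm, if_pos rfl]; linarith [hf (τ + ν)]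
  have hzero : coeff α f₁ = 0 := by rw [hcoeff, if_pos rfl, if_neg hαν]; ring
  obtain ⟨α₁, hα₁⟩ := m.exists_isLeadMon (f := f₁) (by rintro h; simp [h] at hpos)
  refine ⟨f₁, J.sub_mem hfJ (J.mul_mem_left _ hgJ), hf₁, α₁, hα₁, ?_, ?_⟩
  · by_cases h : τ + ν = α₁
    · subst h
      have := m.add_le_add_right _ _ (hgβ.2 ν (by simp [hg])) τ
      rwa [add_comm ν, add_comm β, hτ] at this
    by_cases h' : α = α₁
    · exact h' ▸ m.le_refl α
    refine hfα.2 α₁ (mem_support_iff.2 fun h0 => mem_support_iff.1 hα₁.1 ?_)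
    rw [hcoeff, if_neg h', if_neg h, h0]; ring
  · rintro rfl
    exact mem_support_iff.1 hα₁.1 hzero

theorem IsGroebnerBasis.eq_zero_of_nonnegCoeffs {m : MonOrd n}
    {G : Finset (MvPolynomial (Fin n) ℝ)} {J : Ideal (MvPolynomial (Fin n) ℝ)}
    (hG : IsGroebnerBasis m G J) (hbin : ∀ g ∈ G, g.support.card = 2)
    (hmixed : ∀ g ∈ G, ¬ NonnegCoeffs g ∧ ¬ NonposCoeffs g)
    {f : MvPolynomial (Fin n) ℝ} (hfJ : f ∈ J) (hf : NonnegCoeffs f) : f = 0 := by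
  by_contra hf0
  obtain ⟨α, hα⟩ := m.exists_isLeadMon hf0
  induction α using m.wellFounded_lt.induction generalizing f with
  | _ α ih =>
  obtain ⟨g, hgG, α', β, hα', hβ, hβα⟩ := hG.2.2 f hfJ hf0
  obtain rfl : α' = α := m.le_antisymm _ _ (hα.2 _ hα'.1) (hα'.2 _ hα.1)
  obtain ⟨f₁, hf₁J, hf₁, α₁, hα₁, hlt⟩ := exists_mem_nonnegCoeffs_isLeadMon_lt m hfJ (hG.1 hgG)
    hf hα hβ hβα (hbin g hgG) (hmixed g hgG).1 (hmixed g hgG).2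
  exact ih α₁ hlt hf₁J hf₁ (fun h => by simpa [h] using hα₁.1) hα₁

theorem IsGroebnerBasis.inter_nonnegCoeffs_eq_zero_iff {m : MonOrd n}
    {G : Finset (MvPolynomial (Fin n) ℝ)} {J : Ideal (MvPolynomial (Fin n) ℝ)}
    (hG : IsGroebnerBasis m G J) (hbin : ∀ g ∈ G, g.support.card = 2) :
    (J : Set (MvPolynomial (Fin n) ℝ)) ∩ {f | NonnegCoeffs f} = {0} ↔
      (G : Set (MvPolynomial (Fin n) ℝ)) ∩ {f | NonnegCoeffs f} = ∅ ∧
      (G : Set (MvPolynomial (Fin n) ℝ)) ∩ {f | NonposCoeffs f} = ∅ := by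
  constructor
  · intro h
    have hJ : ∀ f ∈ J, NonnegCoeffs f → f = 0 := fun f hf hnn => h.subset ⟨hf, hnn⟩
    refine ⟨Set.eq_empty_of_forall_notMem fun g ⟨hg, hnn⟩ => hG.2.1 g hg ?_,
      Set.eq_empty_of_forall_notMem fun g ⟨hg, hnp⟩ => hG.2.1 g hg ?_⟩
    · exact hJ g (hG.1 hg) hnn
    · exact neg_eq_zero.1 (hJ (-g) (neg_mem (hG.1 hg)) fun α => by simpa using hnp α)
  · rintro ⟨h₁, h₂⟩
    refine Set.Subset.antisymm (fun f ⟨hf, hnn⟩ => hG.eq_zero_of_nonnegCoeffs hbin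
      (fun g hg => ⟨fun h => h₁.subset ⟨hg, h⟩, fun h => h₂.subset ⟨hg, h⟩⟩) hf hnn) ?_
    rintro _ rfl
    exact ⟨J.zero_mem, fun α => by simp⟩

end Binomial

section Transport

variable {n : ℕ}

theorem IsLeadMon.comap {m : MonOrd n} {e : (Fin n →₀ ℕ) ≃+ (Fin n →₀ ℕ)}
    {f f' : MvPolynomial (Fin n) ℝ} (hsupp : f'.support = f.support.image e) {α : Fin n →₀ ℕ}
    (h : IsLeadMon m f α) : IsLeadMon (m.comap e.symm) f' (e α) := by
  refine ⟨hsupp ▸ Finset.mem_image_of_mem e h.1, ?_⟩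
  rw [hsupp, Finset.forall_mem_image]
  intro β hβ
  simpa [MonOrd.comap] using h.2 β hβ

theorem IsGroebnerBasis.map {m : MonOrd n} {G : Finset (MvPolynomial (Fin n) ℝ)}
    {J : Ideal (MvPolynomial (Fin n) ℝ)} (σ : MvPolynomial (Fin n) ℝ ≃+* MvPolynomial (Fin n) ℝ)
    (e : (Fin n →₀ ℕ) ≃+ (Fin n →₀ ℕ)) (hsupp : ∀ f, (σ f).support = f.support.image e)
    (he : Monotone e) (hG : IsGroebnerBasis m G J) :
    IsGroebnerBasis (m.comap e.symm) (G.image σ) (J.map σ) := by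
  obtain ⟨hGJ, hG0, hlead⟩ := hG
  refine ⟨?_, by simpa using hG0, fun f hf hf0 => ?_⟩
  · rw [Finset.coe_image]
    exact Set.image_subset_iff.2 fun g hg => Ideal.mem_map_of_mem σ (hGJ hg)
  obtain ⟨f₀, hf₀, rfl⟩ := (Ideal.mem_map_of_equiv σ f).1 hf
  obtain ⟨g, hg, α, β, hα, hβ, hβα⟩ := hlead f₀ hf₀ (by simpa using hf0)
  exact ⟨σ g, Finset.mem_image_of_mem σ hg, e α, e β, hα.comap (hsupp f₀), hβ.comap (hsupp g),
    he hβα⟩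

end Transport

section SignedPermutation

variable {n : ℕ} {π : Equiv.Perm (Fin n)} {u : Fin n → ℝ}
  {σ : MvPolynomial (Fin n) ℝ ≃ₐ[ℝ] MvPolynomial (Fin n) ℝ}

theorem signedPerm_monomial (hσ : ∀ i, σ (X i) = u i • X (π i)) (α : Fin n →₀ ℕ) (c : ℝ) :
    σ (monomial α c) = monomial (Finsupp.domCongr π α) ((α.prod fun i k => u i ^ k) * c) := by
  rw [monomial_eq, map_mul, ← algebraMap_eq, σ.commutes, Finsupp.prod, map_prod]
  simp_rw [map_pow, hσ, smul_eq_C_mul, mul_pow, ← C_pow]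
  rw [Finset.prod_mul_distrib, ← map_prod, monomial_eq, C_mul, Finsupp.domCongr_apply,
    Finsupp.prod_equivMapDomain, algebraMap_eq]
  simp only [Finsupp.prod]
  ring

theorem coeff_signedPerm (hσ : ∀ i, σ (X i) = u i • X (π i)) (α : Fin n →₀ ℕ)
    (f : MvPolynomial (Fin n) ℝ) :
    coeff (Finsupp.domCongr π α) (σ f) = (α.prod fun i k => u i ^ k) * coeff α f := by
  induction f using MvPolynomial.induction_on' with
  | monomial β c =>
    simp only [signedPerm_monomial hσ, coeff_monomial, EmbeddingLike.apply_eq_iff_eq]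
    split_ifs with h
    · rw [h]
    · rw [mul_zero]
  | add p q hp hq => rw [map_add, coeff_add, coeff_add, hp, hq, mul_add]

theorem support_signedPerm (hσ : ∀ i, σ (X i) = u i • X (π i)) (hu : ∀ i, u i ≠ 0)
    (f : MvPolynomial (Fin n) ℝ) :
    (σ f).support = f.support.image (Finsupp.domCongr π) := by
  ext β
  obtain ⟨α, rfl⟩ := (Finsupp.domCongr π).surjective β
  have hprod : (α.prod fun i k => u i ^ k) ≠ 0 :=
    Finsupp.prod_ne_zero_iff.2 fun i _ => pow_ne_zero _ (hu i)
  rw [(Finsupp.domCongr π).injective.mem_finset_image, mem_support_iff, mem_support_iff,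
    coeff_signedPerm hσ, mul_ne_zero_iff, and_iff_right hprod]

theorem wdeg_domCongr (w : Fin n → ℚ) (α : Fin n →₀ ℕ) :
    wdeg (fun j => w (π.symm j)) (Finsupp.domCongr π α) = wdeg w α := by
  simp only [wdeg, Finsupp.domCongr_apply, Finsupp.equivMapDomain_apply]
  exact π.symm.sum_comp fun i => w i * (α i : ℚ)

theorem initialForm_signedPerm (hσ : ∀ i, σ (X i) = u i • X (π i)) (hu : ∀ i, u i ≠ 0)
    (w : Fin n → ℚ) (f : MvPolynomial (Fin n) ℝ) :
    initialForm (fun j => w (π.symm j)) (σ f) = σ (initialForm w f) := by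
  classical
  simp only [initialForm, support_signedPerm hσ hu, Finset.filter_image, Finset.forall_mem_image,
    wdeg_domCongr, map_sum, signedPerm_monomial hσ]
  rw [Finset.sum_image fun _ _ _ _ h => (Finsupp.domCongr π).injective h]
  simp only [coeff_signedPerm hσ]

theorem initialIdeal_map_signedPerm (hσ : ∀ i, σ (X i) = u i • X (π i)) (hu : ∀ i, u i ≠ 0)
    (w : Fin n → ℚ) (I : Ideal (MvPolynomial (Fin n) ℝ)) :
    initialIdeal (fun j => w (π.symm j)) (I.map σ) = (initialIdeal w I).map σ := by
  have hI : ((I.map σ : Ideal _) : Set (MvPolynomial (Fin n) ℝ)) = σ '' I := by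
    ext f; exact Ideal.mem_map_of_equiv σ f
  rw [initialIdeal, initialIdeal, Ideal.map_span, hI, Set.image_image, Set.image_image]
  simp only [initialForm_signedPerm hσ hu]

end SignedPermutation

/-- Let `I` be an ideal of `ℝ[x₁,…,xₙ]` invariant under the signed permutation automorphism
`σ` (with `σ·xᵢ = uᵢ·x_{π(i)}`), let `w ∈ ℚⁿ`, and let `G` be a Gröbner basis of `in_w(I)`
consisting of binomials.  Then `in_{π·w}(I) ∩ ℝ≥0[x] = {0}` if and only if
`σ·G ∩ ℝ≥0[x] = ∅` and `σ·G ∩ ℝ≤0[x] = ∅`. -/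
theorem statement11 (n : ℕ)
    (π : Equiv.Perm (Fin n)) (u : Fin n → ℝ) (hu : ∀ i, u i = 1 ∨ u i = -1)
    (σ : MvPolynomial (Fin n) ℝ ≃ₐ[ℝ] MvPolynomial (Fin n) ℝ)
    (hσ : ∀ i, σ (X i) = u i • X (π i))
    (I : Ideal (MvPolynomial (Fin n) ℝ)) (hI : Ideal.map σ.toAlgHom.toRingHom I = I)
    (w : Fin n → ℚ) (m : MonOrd n) (G : Finset (MvPolynomial (Fin n) ℝ))
    (hG : IsGroebnerBasis m G (initialIdeal w I))
    (hbin : ∀ g ∈ G, g.support.card = 2) :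
    (initialIdeal (fun j => w (π.symm j)) I : Set (MvPolynomial (Fin n) ℝ)) ∩
        {f | NonnegCoeffs f} = {0} ↔
      ((fun g => σ g) '' (G : Set (MvPolynomial (Fin n) ℝ))) ∩ {f | NonnegCoeffs f} = ∅ ∧
      ((fun g => σ g) '' (G : Set (MvPolynomial (Fin n) ℝ))) ∩ {f | NonposCoeffs f} = ∅ := by
  have hu₀ : ∀ i, u i ≠ 0 := fun i => by rcases hu i with h | h <;> norm_num [h]
  have hsupp := support_signedPerm hσ hu₀
  have hJ : initialIdeal (fun j => w (π.symm j)) I = (initialIdeal w I).map σ := by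
    conv_lhs => rw [← hI]
    exact initialIdeal_map_signedPerm hσ hu₀ w I
  have hG' := hG.map σ.toRingEquiv (Finsupp.domCongr π) hsupp
    fun a b h j => by simpa using h (π.symm j)
  have hbin' : ∀ g ∈ G.image σ, g.support.card = 2 := by
    simpa only [Finset.forall_mem_image, hsupp,
      Finset.card_image_of_injective _ (Finsupp.domCongr π).injective] using hbin
  rw [hJ]
  have key := hG'.inter_nonnegCoeffs_eq_zero_iff hbin'
  rw [Finset.coe_image] at key
  exact key
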